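/- arXiv:1308.1457 — 3 statements merged into one kernel-verified Lean document; each statement's English description precedes it below -/
import Mathlib

section
/- Let 1 < q < ∞ and a satisfy -2/q < a < 0. Then for a nonnegative sequence (c_j)_{j∈ℤ}, ∫_0^∞ ( ∑_{j : 2^{2j} ≤ 1/t} 2^{aj} c_j )^q t^{qa/2} dt ≤ C ∑_{j∈ℤ} 2^{-2j} c_j^q, where C depends only on a and q. -/
open MeasureTheory Real Set ENNReal

open intervalIntegral in

lemma lint_rpow_Ioc {T r : ℝ} (hT : 0 < T) (hr : -1 < r) :
    ∫⁻ t in Set.Ioc (0:ℝ) T, ENNReal.ofReal (t ^ r) = ENNReal.ofReal (T ^ (r+1) / (r+1)) := by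
  have hint : IntervalIntegrable (fun x : ℝ => x ^ r) volume 0 T := intervalIntegrable_rpow' hr
  have hIoc : MeasureTheory.IntegrableOn (fun x : ℝ => x ^ r) (Set.Ioc 0 T) := by
    rwa [intervalIntegrable_iff_integrableOn_Ioc_of_le hT.le] at hint
  rw [← MeasureTheory.ofReal_integral_eq_lintegral_ofReal hIoc ?_]
  · congr 1
    rw [← intervalIntegral.integral_of_le hT.le, integral_rpow (Or.inl hr),
        Real.zero_rpow (by linarith), sub_zero]
  · filter_upwards [ae_restrict_mem measurableSet_Ioc] with t ht
    exact Real.rpow_nonneg ht.1.le _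

lemma geom_tail {δ t : ℝ} (hδ : 0 < δ) (ht : 0 < t) :
    (∑' j : ℤ, if (2:ℝ) ^ (2*j) ≤ 1/t then ENNReal.ofReal ((2:ℝ) ^ (δ * (j:ℝ))) else 0)
      ≤ ENNReal.ofReal ((1 - (2:ℝ) ^ (-δ))⁻¹) * ENNReal.ofReal (t ^ (-δ/2)) := by
  have h1t : (0:ℝ) < 1/t := by positivity
  have hb1 : (1:ℝ) < 2 := one_lt_two
  set J : ℤ := ⌊Real.logb 2 (1/t) / 2⌋ with hJdef
  have hkey : ∀ j : ℤ, (2:ℝ) ^ (2*j) ≤ 1/t → j ≤ J := by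
    intro j hj
    have hlog : ((2*j : ℤ):ℝ) ≤ Real.logb 2 (1/t) := by
      have h2 : Real.logb 2 ((2:ℝ) ^ (2*j)) ≤ Real.logb 2 (1/t) :=
        Real.logb_le_logb_of_le one_lt_two (by positivity) hj
      rwa [← Real.rpow_intCast (2:ℝ) (2*j), Real.logb_rpow two_pos (by norm_num)] at h2
    rw [Int.le_floor]
    push_cast at hlog ⊢
    linarith
  have hgeom_lt : (2:ℝ) ^ (-δ) < 1 := Real.rpow_lt_one_of_one_lt_of_neg hb1 (by linarith)
  have hgeom_pos : (0:ℝ) < (2:ℝ) ^ (-δ) := by positivity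
  calc (∑' j : ℤ, if (2:ℝ) ^ (2*j) ≤ 1/t then ENNReal.ofReal ((2:ℝ) ^ (δ * (j:ℝ))) else 0)
      ≤ ∑' j : ℤ, (if j ≤ J then ENNReal.ofReal ((2:ℝ) ^ (δ * (j:ℝ))) else 0) := by
        apply ENNReal.tsum_le_tsum; intro j
        by_cases h : (2:ℝ) ^ (2*j) ≤ 1/t
        · simp only [if_pos h, if_pos (hkey j h)]; exact le_rfl
        · simp only [if_neg h]; exact zero_le
    _ = ∑' k : ℕ, ENNReal.ofReal ((2:ℝ) ^ (δ * ((J - (k:ℤ) : ℤ):ℝ))) := by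
        rw [← Function.Injective.tsum_eq (g := fun k : ℕ => J - (k:ℤ)) ?_ ?_]
        · exact tsum_congr fun k => if_pos (by omega)
        · intro m n h; simpa using h
        · intro j hj
          have hjJ : j ≤ J := by
            by_contra h; simp only [Function.mem_support, if_neg h] at hj; exact hj rfl
          exact ⟨(J - j).toNat, by simp; omega⟩
    _ = ∑' k : ℕ, ENNReal.ofReal ((2:ℝ) ^ (δ * (J:ℝ))) * (ENNReal.ofReal ((2:ℝ) ^ (-δ)))^k := by
        apply tsum_congr; intro k
        rw [← ENNReal.ofReal_pow hgeom_pos.le, ← ENNReal.ofReal_mul (by positivity)]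
        congr 1
        rw [← Real.rpow_natCast ((2:ℝ) ^ (-δ)) k, ← Real.rpow_mul (by norm_num),
            ← Real.rpow_add two_pos]
        congr 1
        push_cast
        ring
    _ = ENNReal.ofReal ((2:ℝ) ^ (δ * (J:ℝ))) * ENNReal.ofReal ((1 - (2:ℝ) ^ (-δ))⁻¹) := by
        rw [ENNReal.tsum_mul_left, ENNReal.tsum_geometric]
        congr 1
        rw [eq_comm, ENNReal.ofReal_inv_of_pos (by linarith),
            ENNReal.ofReal_sub _ hgeom_pos.le, ENNReal.ofReal_one]
    _ ≤ ENNReal.ofReal ((1 - (2:ℝ) ^ (-δ))⁻¹) * ENNReal.ofReal (t ^ (-δ/2)) := by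
        rw [mul_comm]
        apply mul_le_mul_right (ENNReal.ofReal_le_ofReal ?_)
        have hJle : (J:ℝ) ≤ Real.logb 2 (1/t) / 2 := Int.floor_le _
        have : (2:ℝ) ^ (δ * (J:ℝ)) ≤ (2:ℝ) ^ (Real.logb 2 (1/t) * (δ/2)) := by
          rw [Real.rpow_le_rpow_left_iff hb1]
          nlinarith
        refine this.trans_eq ?_
        rw [Real.rpow_mul (by norm_num), Real.rpow_logb two_pos (by norm_num) h1t,
            one_div, Real.inv_rpow ht.le, ← Real.rpow_neg ht.le, neg_div]

lemma per_j_integral {ρ : ℝ} (hρ : -1 < ρ) (j : ℤ) :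
    (∫⁻ t in Set.Ioi (0:ℝ), if (2:ℝ)^(2*j) ≤ 1/t then ENNReal.ofReal (t ^ ρ) else 0)
      = ENNReal.ofReal (((2:ℝ)^(-(2*j)) : ℝ) ^ (ρ+1) / (ρ+1)) := by
  have hTpos : (0:ℝ) < (2:ℝ) ^ (-(2*j)) := zpow_pos (by norm_num) _
  have hcond : ∀ t : ℝ, 0 < t → ((2:ℝ)^(2*j) ≤ 1/t ↔ t ≤ (2:ℝ)^(-(2*j))) := by
    intro t ht
    rw [zpow_neg, one_div]
    exact le_inv_comm₀ (by positivity) ht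
  rw [setLIntegral_congr_fun measurableSet_Ioi
      ((fun t ht => ?_)
        : Set.EqOn (fun t : ℝ =>
          (if (2:ℝ)^(2*j) ≤ 1/t then ENNReal.ofReal (t ^ ρ) else 0))
            ((Set.Iic ((2:ℝ)^(-(2*j)))).indicator (fun t => ENNReal.ofReal (t ^ ρ))) (Set.Ioi (0:ℝ)))]
  · rw [lintegral_indicator measurableSet_Iic, Measure.restrict_restrict measurableSet_Iic,
      Set.inter_comm, Set.Ioi_inter_Iic]
    exact lint_rpow_Ioc hTpos hρ
  · simp only [Set.indicator, Set.mem_Iic]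
    by_cases h : (2:ℝ)^(2*j) ≤ 1/t
    · rw [if_pos h, if_pos ((hcond t ht).1 h)]
    · rw [if_neg h, if_neg (fun hc => h ((hcond t ht).2 hc))]

lemma pointwise_holder {q q' a ε : ℝ} (hq : 1 < q) (hq' : q' = q/(q-1)) (hε : 0 < ε)
    (c : ℤ → ℝ≥0∞) {t : ℝ} (ht : 0 < t) :
    (∑' j : ℤ, if (2:ℝ)^(2*j) ≤ 1/t then ENNReal.ofReal ((2:ℝ)^(a*(j:ℝ))) * c j else 0)^q
        * ENNReal.ofReal (t^(q*a/2))
      ≤ ENNReal.ofReal (((1 - (2:ℝ)^(-(ε*q')))⁻¹)^(q-1)) *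
        ∑' j : ℤ, (if (2:ℝ)^(2*j) ≤ 1/t
            then ENNReal.ofReal ((2:ℝ)^(((a-ε)*q)*(j:ℝ))) * c j ^ q
                  * ENNReal.ofReal (t^((a-ε)*q/2)) else 0) := by
  have hq0 : (0:ℝ) < q := by linarith
  have hq1 : (0:ℝ) < q - 1 := by linarith
  have hq'pos : (0:ℝ) < q' := by rw [hq']; positivity
  have hpq : q'.HolderConjugate q := ((Real.holderConjugate_iff_eq_conjExponent hq).2 hq').symm
  have hKpos : (0:ℝ) < (1 - (2:ℝ)^(-(ε*q')))⁻¹ := by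
    have : (2:ℝ)^(-(ε*q')) < 1 :=
      Real.rpow_lt_one_of_one_lt_of_neg one_lt_two (by nlinarith)
    have h2 : (0:ℝ) < 1 - (2:ℝ)^(-(ε*q')) := by linarith
    positivity
  set f : ℤ → ℝ≥0∞ := fun j =>
    if (2:ℝ)^(2*j) ≤ 1/t then ENNReal.ofReal ((2:ℝ)^(ε*(j:ℝ))) else 0 with hfdef
  set g : ℤ → ℝ≥0∞ := fun j =>
    if (2:ℝ)^(2*j) ≤ 1/t then ENNReal.ofReal ((2:ℝ)^((a-ε)*(j:ℝ))) * c j else 0 with hgdef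
  have hS : (∑' j : ℤ, if (2:ℝ)^(2*j) ≤ 1/t
      then ENNReal.ofReal ((2:ℝ)^(a*(j:ℝ))) * c j else 0) = ∑' j, f j * g j := by
    refine tsum_congr fun j => ?_
    by_cases h : (2:ℝ)^(2*j) ≤ 1/t
    · simp only [hfdef, hgdef, if_pos h]
      rw [← mul_assoc, ← ENNReal.ofReal_mul (by positivity), ← Real.rpow_add two_pos]
      have : ε*(j:ℝ) + (a-ε)*(j:ℝ) = a*(j:ℝ) := by ring
      rw [this]
    · simp only [hfdef, hgdef, if_neg h, mul_zero, zero_mul]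
  have hHolder := ENNReal.lintegral_mul_le_Lp_mul_Lq (Measure.count : Measure ℤ) hpq
      (measurable_of_countable f).aemeasurable (measurable_of_countable g).aemeasurable
  simp only [Pi.mul_apply] at hHolder
  rw [lintegral_count, lintegral_count, lintegral_count] at hHolder
  have e1 : 1/q' * q = q - 1 := by rw [hq']; field_simp
  have e2 : q' * (q - 1) = q := by rw [hq']; field_simp
  have h1 : (∑' j, f j * g j)^q ≤ (∑' j, f j ^ q')^(q-1) * (∑' j, g j ^ q) := by
    calc (∑' j, f j * g j)^q ≤ ((∑' j, f j ^ q')^(1/q') * (∑' j, g j ^ q)^(1/q))^q :=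
          ENNReal.rpow_le_rpow hHolder hq0.le
      _ = (∑' j, f j ^ q')^(q-1) * (∑' j, g j ^ q) := by
          rw [ENNReal.mul_rpow_of_nonneg _ _ hq0.le, ← ENNReal.rpow_mul, ← ENNReal.rpow_mul,
            e1, one_div, inv_mul_cancel₀ hq0.ne', ENNReal.rpow_one]
  have hfq : ∀ j : ℤ, f j ^ q' =
      (if (2:ℝ)^(2*j) ≤ 1/t then ENNReal.ofReal ((2:ℝ)^((ε*q')*(j:ℝ))) else 0) := by
    intro j
    by_cases h : (2:ℝ)^(2*j) ≤ 1/t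
    · simp only [hfdef, if_pos h]
      rw [ENNReal.ofReal_rpow_of_pos (by positivity), ← Real.rpow_mul (by norm_num)]
      have : ε*(j:ℝ)*q' = (ε*q')*(j:ℝ) := by ring
      rw [this]
    · simp only [hfdef, if_neg h]
      exact ENNReal.zero_rpow_of_pos hq'pos
  have hfsum : (∑' j, f j ^ q')
      ≤ ENNReal.ofReal ((1 - (2:ℝ)^(-(ε*q')))⁻¹) * ENNReal.ofReal (t^(-(ε*q')/2)) := by
    rw [tsum_congr hfq]
    exact geom_tail (by positivity) ht
  have hfpow : (∑' j, f j ^ q')^(q-1)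
      ≤ ENNReal.ofReal (((1 - (2:ℝ)^(-(ε*q')))⁻¹)^(q-1)) * ENNReal.ofReal (t^(-(ε*q)/2)) := by
    refine (ENNReal.rpow_le_rpow hfsum hq1.le).trans_eq ?_
    rw [ENNReal.mul_rpow_of_nonneg _ _ hq1.le, ENNReal.ofReal_rpow_of_pos hKpos,
      ENNReal.ofReal_rpow_of_pos (Real.rpow_pos_of_pos ht _), ← Real.rpow_mul ht.le]
    have : -(ε*q')/2 * (q-1) = -(ε*q)/2 := by
      have : ε * (q' * (q-1)) = ε * q := by rw [e2]
      linarith [this]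
    rw [this]
  have hgq : ∀ j : ℤ, g j ^ q = (if (2:ℝ)^(2*j) ≤ 1/t
      then ENNReal.ofReal ((2:ℝ)^(((a-ε)*q)*(j:ℝ))) * c j ^ q else 0) := by
    intro j
    by_cases h : (2:ℝ)^(2*j) ≤ 1/t
    · simp only [hgdef, if_pos h]
      rw [ENNReal.mul_rpow_of_nonneg _ _ hq0.le, ENNReal.ofReal_rpow_of_pos (by positivity),
        ← Real.rpow_mul (by norm_num)]
      have : (a-ε)*(j:ℝ)*q = ((a-ε)*q)*(j:ℝ) := by ring
      rw [this]
    · simp only [hgdef, if_neg h]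
      exact ENNReal.zero_rpow_of_pos hq0
  calc (∑' j : ℤ, if (2:ℝ)^(2*j) ≤ 1/t
          then ENNReal.ofReal ((2:ℝ)^(a*(j:ℝ))) * c j else 0)^q * ENNReal.ofReal (t^(q*a/2))
      ≤ ((ENNReal.ofReal (((1 - (2:ℝ)^(-(ε*q')))⁻¹)^(q-1)) * ENNReal.ofReal (t^(-(ε*q)/2)))
          * (∑' j, g j ^ q)) * ENNReal.ofReal (t^(q*a/2)) := by
        rw [hS]
        exact mul_le_mul_left (h1.trans (mul_le_mul_left hfpow _)) _
    _ = ENNReal.ofReal (((1 - (2:ℝ)^(-(ε*q')))⁻¹)^(q-1)) *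
          ((∑' j, g j ^ q) * (ENNReal.ofReal (t^(-(ε*q)/2)) * ENNReal.ofReal (t^(q*a/2)))) := by
        ring
    _ = ENNReal.ofReal (((1 - (2:ℝ)^(-(ε*q')))⁻¹)^(q-1)) *
          ((∑' j, g j ^ q) * ENNReal.ofReal (t^((a-ε)*q/2))) := by
        rw [← ENNReal.ofReal_mul (by positivity), ← Real.rpow_add ht]
        have : -(ε*q)/2 + q*a/2 = (a-ε)*q/2 := by ring
        rw [this]
    _ = ENNReal.ofReal (((1 - (2:ℝ)^(-(ε*q')))⁻¹)^(q-1)) *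
        ∑' j : ℤ, (if (2:ℝ)^(2*j) ≤ 1/t
            then ENNReal.ofReal ((2:ℝ)^(((a-ε)*q)*(j:ℝ))) * c j ^ q
                  * ENNReal.ofReal (t^((a-ε)*q/2)) else 0) := by
        congr 1
        rw [← ENNReal.tsum_mul_right]
        refine tsum_congr fun j => ?_
        rw [hgq j]
        by_cases h : (2:ℝ)^(2*j) ≤ 1/t
        · simp only [if_pos h]
        · simp only [if_neg h, zero_mul]

/-- Low-frequency dyadic summation estimate:
`∫_0^∞ (∑_{2^{2j} ≤ 1/t} 2^{aj} c_j)^q t^{qa/2} dt ≤ C ∑_j 2^{-2j} c_j^q`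
for `-2/q < a < 0`. -/
theorem dyadic_low_frequency_estimate (q a : ℝ) (hq : 1 < q)
    (ha : -2 / q < a) (ha' : a < 0) :
    ∃ C : ℝ≥0∞, C ≠ ⊤ ∧ ∀ c : ℤ → ℝ≥0∞,
      (∫⁻ t in Set.Ioi (0 : ℝ),
          (∑' j : ℤ, if (2 : ℝ) ^ (2 * j) ≤ 1 / t
              then ENNReal.ofReal ((2 : ℝ) ^ (a * (j : ℝ))) * c j else 0) ^ q
            * ENNReal.ofReal (t ^ (q * a / 2)))
        ≤ C * ∑' j : ℤ, ENNReal.ofReal ((2 : ℝ) ^ (-2 * j : ℤ)) * c j ^ q := by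
  have hq0 : (0:ℝ) < q := by linarith
  have hq1 : (0:ℝ) < q - 1 := by linarith
  have haq : -2 < a * q := by
    rw [div_lt_iff₀ hq0] at ha; linarith
  set q' : ℝ := q/(q-1) with hq'def
  set ε : ℝ := (a + 2/q)/2 with hεdef
  have hε : 0 < ε := by
    have h2 : -a < 2/q := (lt_div_iff₀ hq0).2 (by linarith)
    rw [hεdef]; linarith
  have hρeq : (a - ε)*q/2 = (a*q - 2)/4 := by
    rw [hεdef]; field_simp; ring
  have hρ1 : -1 < (a - ε)*q/2 := by rw [hρeq]; linarith
  have hρ1' : 0 < (a - ε)*q/2 + 1 := by linarith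
  set K1 : ℝ≥0∞ := ENNReal.ofReal (((1 - (2:ℝ)^(-(ε*q')))⁻¹)^(q-1)) with hK1def
  refine ⟨K1 * ENNReal.ofReal (((a - ε)*q/2 + 1)⁻¹),
    ENNReal.mul_ne_top ENNReal.ofReal_ne_top ENNReal.ofReal_ne_top, fun c => ?_⟩
  have hφmeas : ∀ j : ℤ, Measurable (fun t : ℝ =>
      if (2:ℝ)^(2*j) ≤ 1/t
        then ENNReal.ofReal ((2:ℝ)^(((a-ε)*q)*(j:ℝ))) * c j ^ q
              * ENNReal.ofReal (t^((a-ε)*q/2)) else 0) := by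
    intro j
    exact Measurable.ite (measurableSet_le measurable_const (measurable_const.div measurable_id))
      (measurable_const.mul (Measurable.ennreal_ofReal (by fun_prop))) measurable_const
  calc (∫⁻ t in Set.Ioi (0 : ℝ),
          (∑' j : ℤ, if (2 : ℝ) ^ (2 * j) ≤ 1 / t
              then ENNReal.ofReal ((2 : ℝ) ^ (a * (j : ℝ))) * c j else 0) ^ q
            * ENNReal.ofReal (t ^ (q * a / 2)))
      ≤ ∫⁻ t in Set.Ioi (0:ℝ), K1 *
          ∑' j : ℤ, (if (2:ℝ)^(2*j) ≤ 1/t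
            then ENNReal.ofReal ((2:ℝ)^(((a-ε)*q)*(j:ℝ))) * c j ^ q
                  * ENNReal.ofReal (t^((a-ε)*q/2)) else 0) := by
        refine lintegral_mono_ae ?_
        filter_upwards [ae_restrict_mem measurableSet_Ioi] with t ht
        exact pointwise_holder hq hq'def hε c ht
    _ = K1 * ∑' j : ℤ, ∫⁻ t in Set.Ioi (0:ℝ),
          (if (2:ℝ)^(2*j) ≤ 1/t
            then ENNReal.ofReal ((2:ℝ)^(((a-ε)*q)*(j:ℝ))) * c j ^ q
                  * ENNReal.ofReal (t^((a-ε)*q/2)) else 0) := by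
        rw [lintegral_const_mul' K1 _ ENNReal.ofReal_ne_top,
          lintegral_tsum (fun j => (hφmeas j).aemeasurable)]
    _ = K1 * ∑' j : ℤ, ENNReal.ofReal (((a - ε)*q/2 + 1)⁻¹) *
          (ENNReal.ofReal ((2:ℝ)^(-2*j : ℤ)) * c j ^ q) := by
        congr 1
        refine tsum_congr fun j => ?_
        have heq : ∀ t : ℝ, (if (2:ℝ)^(2*j) ≤ 1/t
            then ENNReal.ofReal ((2:ℝ)^(((a-ε)*q)*(j:ℝ))) * c j ^ q
                  * ENNReal.ofReal (t^((a-ε)*q/2)) else 0)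
            = (ENNReal.ofReal ((2:ℝ)^(((a-ε)*q)*(j:ℝ))) * c j ^ q)
              * (if (2:ℝ)^(2*j) ≤ 1/t then ENNReal.ofReal (t^((a-ε)*q/2)) else 0) := by
          intro t
          by_cases h : (2:ℝ)^(2*j) ≤ 1/t
          · rw [if_pos h, if_pos h]
          · rw [if_neg h, if_neg h, mul_zero]
        have hmeas2 : Measurable (fun t : ℝ =>
            if (2:ℝ)^(2*j) ≤ 1/t then ENNReal.ofReal (t^((a-ε)*q/2)) else 0) :=
          Measurable.ite (measurableSet_le measurable_const (measurable_const.div measurable_id))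
            (Measurable.ennreal_ofReal (by fun_prop)) measurable_const
        rw [lintegral_congr heq, lintegral_const_mul'' _ hmeas2.aemeasurable,
          per_j_integral hρ1 j]
        -- now pure algebra
        have hbase : (0:ℝ) < (2:ℝ)^(-(2*j)) := zpow_pos (by norm_num) _
        have key : (2:ℝ)^(((a-ε)*q)*(j:ℝ)) * (((2:ℝ)^(-(2*j)) : ℝ) ^ ((a-ε)*q/2+1))
            = (2:ℝ)^(-2*j : ℤ) := by
          rw [← Real.rpow_intCast (2:ℝ) (-(2*j)), ← Real.rpow_intCast (2:ℝ) (-2*j),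
            ← Real.rpow_mul (by norm_num : (0:ℝ) ≤ 2), ← Real.rpow_add two_pos]
          congr 1
          push_cast
          ring
        have hAB : ENNReal.ofReal ((2:ℝ)^(((a-ε)*q)*(j:ℝ)))
              * ENNReal.ofReal (((2:ℝ)^(-(2*j)) : ℝ) ^ ((a-ε)*q/2+1) / ((a-ε)*q/2+1))
            = ENNReal.ofReal (((a-ε)*q/2+1)⁻¹) * ENNReal.ofReal ((2:ℝ)^(-2*j : ℤ)) := by
          rw [← ENNReal.ofReal_mul (by positivity), ← ENNReal.ofReal_mul (by positivity)]
          congr 1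
          rw [← mul_div_assoc, key, div_eq_inv_mul]
        calc ENNReal.ofReal ((2:ℝ)^(((a-ε)*q)*(j:ℝ))) * c j ^ q
              * ENNReal.ofReal (((2:ℝ)^(-(2*j)) : ℝ) ^ ((a-ε)*q/2+1) / ((a-ε)*q/2+1))
            = (ENNReal.ofReal ((2:ℝ)^(((a-ε)*q)*(j:ℝ)))
                * ENNReal.ofReal (((2:ℝ)^(-(2*j)) : ℝ) ^ ((a-ε)*q/2+1) / ((a-ε)*q/2+1)))
                * c j ^ q := by ring
          _ = (ENNReal.ofReal (((a-ε)*q/2+1)⁻¹) * ENNReal.ofReal ((2:ℝ)^(-2*j : ℤ)))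
                * c j ^ q := by rw [hAB]
          _ = ENNReal.ofReal (((a-ε)*q/2+1)⁻¹)
                * (ENNReal.ofReal ((2:ℝ)^(-2*j : ℤ)) * c j ^ q) := by rw [mul_assoc]
    _ = K1 * ENNReal.ofReal (((a - ε)*q/2 + 1)⁻¹) *
          ∑' j : ℤ, ENNReal.ofReal ((2:ℝ)^(-2*j : ℤ)) * c j ^ q := by
        rw [ENNReal.tsum_mul_left, mul_assoc]
end

section
/- Let 1 < q < ∞, b > 0, and m be chosen so that q(n-m) + qb/2 + 1 < 0. Then for any nonnegative sequence (c_j)_{j∈ℤ}, ∫_0^∞ ( ∑_{j : 2^{2j} ≥ 1/t} 2^{(2n-2m)j} t^{n-m} c_j )^q dt ≤ C ∑_{j∈ℤ} 2^{-2j} c_j^q, with C depending only on n, m, b, q. -/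
open MeasureTheory Real Set ENNReal

/-!
Write `s_j = 4^j t`, so that the `j`-th term is `s_j^σ c_j` with `σ = n - m`, summed over
`s_j ≥ 1`. Splitting `s_j^σ = s_j^{-b/2} · s_j^{σ + b/2}` and applying the weighted Hölder
inequality with the weights `s_j^{-b/2}`, whose sum over `s_j ≥ 1` is a geometric series bounded
independently of `t`, reduces the `q`-th power to `∑_j s_j^p c_j^q` with
`p = qσ + (q - 1) b/2 < -1`. Each term now integrates exactly: `∫_{4^j t ≥ 1} (4^j t)^p dt`
equals `4^{-j} / (-(p + 1))`.
-/

namespace ENNReal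

variable {ι : Type*}

theorem inner_le_weight_mul_Lp_tsum {p : ℝ} (hp : 1 ≤ p) (w f : ι → ℝ≥0∞) :
    ∑' i, w i * f i ≤ (∑' i, w i) ^ (1 - p⁻¹) * (∑' i, w i * f i ^ p) ^ p⁻¹ := by
  rw [ENNReal.tsum_eq_iSup_sum]
  refine iSup_le fun s => (inner_le_weight_mul_Lp_of_nonneg s hp w f).trans ?_
  exact mul_le_mul'
    (rpow_le_rpow (ENNReal.sum_le_tsum s) (sub_nonneg.2 (inv_le_one_of_one_le₀ hp)))
    (rpow_le_rpow (ENNReal.sum_le_tsum s) (by positivity))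

theorem rpow_tsum_mul_le_weight_mul_tsum {p : ℝ} (hp : 1 ≤ p) (w f : ι → ℝ≥0∞) :
    (∑' i, w i * f i) ^ p ≤ (∑' i, w i) ^ (p - 1) * ∑' i, w i * f i ^ p := by
  have hp₀ : 0 < p := zero_lt_one.trans_le hp
  calc (∑' i, w i * f i) ^ p
      ≤ ((∑' i, w i) ^ (1 - p⁻¹) * (∑' i, w i * f i ^ p) ^ p⁻¹) ^ p :=
        rpow_le_rpow (inner_le_weight_mul_Lp_tsum hp w f) hp₀.le
    _ = (∑' i, w i) ^ (p - 1) * ∑' i, w i * f i ^ p := by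
        rw [mul_rpow_of_nonneg _ _ hp₀.le, ← rpow_mul, ← rpow_mul, sub_mul,
          inv_mul_cancel₀ hp₀.ne', one_mul, rpow_one]

end ENNReal

theorem tsum_indicator_Ici_one_rpow_neg_le {a γ t : ℝ} (ha : 1 < a) (hγ : 0 < γ) (ht : 0 < t) :
    ∑' j : ℤ, (Ici 1).indicator (fun s => ENNReal.ofReal (s ^ (-γ))) (a ^ j * t)
      ≤ (1 - ENNReal.ofReal (a ^ (-γ)))⁻¹ := by
  -- `k + 1` is the least `j` with `1 ≤ a ^ j * t`.
  obtain ⟨k, hk_lt, hk_le⟩ := exists_mem_Ioc_zpow (inv_pos.2 ht) ha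
  have ha₀ : 0 < a := zero_lt_one.trans ha
  have hsupp : (Function.support fun j : ℤ =>
      (Ici 1).indicator (fun s => ENNReal.ofReal (s ^ (-γ))) (a ^ j * t)) ⊆
      range fun n : ℕ => k + 1 + n := by
    intro j hj
    have hkj : k < j := by
      by_contra! hjk
      have : a ^ j * t < 1 := calc
        a ^ j * t ≤ a ^ k * t := by gcongr; exact ha.le
        _ < t⁻¹ * t := by gcongr
        _ = 1 := inv_mul_cancel₀ ht.ne'
      exact this.not_ge (mem_of_indicator_ne_zero hj)
    exact ⟨(j - (k + 1)).toNat, by dsimp only; omega⟩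
  have hinj : Function.Injective fun n : ℕ => k + 1 + (n : ℤ) := fun m n h => by simpa using h
  rw [← hinj.tsum_eq hsupp, ← ENNReal.tsum_geometric]
  refine ENNReal.tsum_le_tsum fun n => (indicator_le_self _ _ _).trans ?_
  have hk₁ : 1 ≤ a ^ (k + 1) * t := by rwa [← inv_le_iff_one_le_mul₀ ht]
  have hsplit : a ^ (k + 1 + n : ℤ) * t = a ^ n * (a ^ (k + 1) * t) := by
    rw [zpow_add₀ ha₀.ne', zpow_natCast]; ring
  rw [← ENNReal.ofReal_pow (by positivity), ← Real.rpow_mul_natCast ha₀.le, hsplit,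
    Real.mul_rpow (by positivity) (by positivity), ← Real.rpow_natCast_mul ha₀.le,
    mul_comm (n : ℝ)]
  gcongr
  exact mul_le_of_le_one_right (by positivity)
    (Real.rpow_le_one_of_one_le_of_nonpos hk₁ (by linarith))

theorem rpow_tsum_indicator_Ici_one_rpow_mul_le {a q σ γ t : ℝ} (ha : 1 < a) (hq : 1 ≤ q)
    (hγ : 0 < γ) (ht : 0 < t) (c : ℤ → ℝ≥0∞) :
    (∑' j : ℤ, (Ici 1).indicator (fun s => ENNReal.ofReal (s ^ σ)) (a ^ j * t) * c j) ^ q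
      ≤ (1 - ENNReal.ofReal (a ^ (-γ)))⁻¹ ^ (q - 1) * ∑' j : ℤ,
          (Ici 1).indicator (fun s => ENNReal.ofReal (s ^ (q * σ + (q - 1) * γ))) (a ^ j * t)
            * c j ^ q := by
  set w : ℤ → ℝ≥0∞ := fun j => (Ici 1).indicator (fun s => ENNReal.ofReal (s ^ (-γ))) (a ^ j * t)
  set f : ℤ → ℝ≥0∞ := fun j => ENNReal.ofReal ((a ^ j * t) ^ (γ + σ)) * c j
  have hq₀ : 0 ≤ q := zero_le_one.trans hq
  have hwf (j : ℤ) :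
      w j * f j = (Ici 1).indicator (fun s => ENNReal.ofReal (s ^ σ)) (a ^ j * t) * c j := by
    by_cases hj : a ^ j * t ∈ Ici 1
    · have hs : 0 < a ^ j * t := zero_lt_one.trans_le hj
      simp only [w, f, indicator_of_mem hj]
      rw [← mul_assoc, ← ENNReal.ofReal_mul (by positivity), ← Real.rpow_add hs,
        neg_add_cancel_left]
    · simp [w, indicator_of_notMem hj]
  have hwfq (j : ℤ) : w j * f j ^ q = (Ici 1).indicator
      (fun s => ENNReal.ofReal (s ^ (q * σ + (q - 1) * γ))) (a ^ j * t) * c j ^ q := by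
    by_cases hj : a ^ j * t ∈ Ici 1
    · have hs : 0 < a ^ j * t := zero_lt_one.trans_le hj
      simp only [w, f, indicator_of_mem hj]
      rw [ENNReal.mul_rpow_of_nonneg _ _ hq₀, ENNReal.ofReal_rpow_of_nonneg (by positivity) hq₀,
        ← Real.rpow_mul hs.le, ← mul_assoc, ← ENNReal.ofReal_mul (by positivity),
        ← Real.rpow_add hs]
      ring_nf
    · simp [w, indicator_of_notMem hj]
  calc _ = (∑' j, w j * f j) ^ q := by simp only [hwf]
    _ ≤ (∑' j, w j) ^ (q - 1) * ∑' j, w j * f j ^ q := rpow_tsum_mul_le_weight_mul_tsum hq w f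
    _ ≤ _ := by
      simp only [hwfq]
      exact mul_le_mul_left
        (rpow_le_rpow (tsum_indicator_Ici_one_rpow_neg_le ha hγ ht) (by linarith)) _

theorem lintegral_Ioi_indicator_Ici_one_rpow_mul {p l : ℝ} (hp : p < -1) (hl : 0 < l) :
    ∫⁻ t in Ioi 0, (Ici 1).indicator (fun s => ENNReal.ofReal (s ^ p)) (l * t)
      = ENNReal.ofReal (l⁻¹ * -(p + 1)⁻¹) := by
  have hl' : 0 < l⁻¹ := inv_pos.2 hl
  have hcut : (fun t => (Ici 1).indicator (fun s => ENNReal.ofReal (s ^ p)) (l * t))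
      = (Ici l⁻¹).indicator fun t => ENNReal.ofReal ((l * t) ^ p) := by
    ext t
    simp only [indicator, mem_Ici, inv_le_iff_one_le_mul₀' hl]
  have hint : IntegrableOn (fun t => (l * t) ^ p) (Ioi l⁻¹) := by
    rw [integrableOn_Ioi_comp_mul_left_iff (· ^ p) _ hl, mul_inv_cancel₀ hl.ne']
    exact integrableOn_Ioi_rpow_of_lt hp zero_lt_one
  have hnonneg : 0 ≤ᵐ[volume.restrict (Ioi l⁻¹)] fun t => (l * t) ^ p :=
    (ae_restrict_iff' measurableSet_Ioi).2 <| ae_of_all _ fun t ht =>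
      Real.rpow_nonneg (mul_nonneg hl.le (hl'.trans ht).le) p
  rw [hcut, lintegral_indicator measurableSet_Ici, Measure.restrict_restrict measurableSet_Ici,
    inter_eq_left.2 (Ici_subset_Ioi.2 hl'), Measure.restrict_congr_set Ioi_ae_eq_Ici.symm,
    ← ofReal_integral_eq_lintegral_ofReal hint hnonneg, integral_comp_mul_left_Ioi (· ^ p) _ hl,
    mul_inv_cancel₀ hl.ne', integral_Ioi_rpow_of_lt hp zero_lt_one, Real.one_rpow, smul_eq_mul,
    neg_div, one_div]

theorem lintegral_Ioi_tsum_indicator_Ici_one_rpow_mul {a p : ℝ} (ha : 0 < a) (hp : p < -1)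
    (d : ℤ → ℝ≥0∞) :
    ∫⁻ t in Ioi 0,
        ∑' j : ℤ, (Ici 1).indicator (fun s => ENNReal.ofReal (s ^ p)) (a ^ j * t) * d j
      = ENNReal.ofReal (-(p + 1)⁻¹) * ∑' j : ℤ, ENNReal.ofReal (a ^ j)⁻¹ * d j := by
  have hmeas (j : ℤ) : Measurable fun t : ℝ =>
      (Ici 1).indicator (fun s => ENNReal.ofReal (s ^ p)) (a ^ j * t) :=
    ((by fun_prop : Measurable fun s : ℝ => ENNReal.ofReal (s ^ p)).indicator
      measurableSet_Ici).comp (measurable_const_mul _)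
  rw [lintegral_tsum fun j => ((hmeas j).mul_const _).aemeasurable, ← ENNReal.tsum_mul_left]
  refine tsum_congr fun j => ?_
  rw [lintegral_mul_const _ (hmeas j),
    lintegral_Ioi_indicator_Ici_one_rpow_mul hp (zpow_pos ha j),
    ENNReal.ofReal_mul (inv_pos.2 (zpow_pos ha j)).le]
  ring

theorem indicator_Ici_one_rpow_four_zpow_mul {σ t : ℝ} (ht : 0 < t) (j : ℤ) :
    (Ici 1).indicator (fun s => ENNReal.ofReal (s ^ σ)) ((4 : ℝ) ^ j * t)
      = if 1 / t ≤ (2 : ℝ) ^ (2 * j) then ENNReal.ofReal (2 ^ (2 * σ * j) * t ^ σ) else 0 := by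
  have hfour : (4 : ℝ) ^ j = 2 ^ (2 * j) := by rw [zpow_mul]; norm_num
  simp only [hfour, indicator_apply, mem_Ici, one_div, inv_le_iff_one_le_mul₀ ht]
  congr 2
  rw [Real.mul_rpow (by positivity) ht.le, ← Real.rpow_intCast, ← Real.rpow_mul zero_le_two]
  push_cast
  ring_nf

/-- High-frequency dyadic summation estimate:
`∫_0^∞ (∑_{2^{2j} ≥ 1/t} 2^{(2n-2m)j} t^{n-m} c_j)^q dt ≤ C ∑_j 2^{-2j} c_j^q`
provided `q(n-m) + qb/2 + 1 < 0` for some `b > 0`. -/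
theorem dyadic_high_frequency_estimate (n : ℕ) (q b m : ℝ) (hq : 1 < q) (hb : 0 < b)
    (hm : q * ((n : ℝ) - m) + q * b / 2 + 1 < 0) :
    ∃ C : ℝ≥0∞, C ≠ ⊤ ∧ ∀ c : ℤ → ℝ≥0∞,
      (∫⁻ t in Set.Ioi (0 : ℝ),
          (∑' j : ℤ, if 1 / t ≤ (2 : ℝ) ^ (2 * j)
              then ENNReal.ofReal ((2 : ℝ) ^ ((2 * (n : ℝ) - 2 * m) * (j : ℝ))
                  * t ^ ((n : ℝ) - m)) * c j
              else 0) ^ q)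
        ≤ C * ∑' j : ℤ, ENNReal.ofReal ((2 : ℝ) ^ (-2 * j : ℤ)) * c j ^ q := by
  set σ : ℝ := n - m
  set p : ℝ := q * σ + (q - 1) * (b / 2)
  have hp : p < -1 := by
    have : p + 1 = q * σ + q * b / 2 + 1 - b / 2 := by ring
    linarith
  set A : ℝ≥0∞ := (1 - ENNReal.ofReal ((4 : ℝ) ^ (-(b / 2))))⁻¹
  have hA : A ^ (q - 1) ≠ ⊤ := by
    refine rpow_ne_top_of_nonneg (by linarith) (inv_ne_top.2 (tsub_pos_of_lt ?_).ne')
    rw [← ENNReal.ofReal_one, ENNReal.ofReal_lt_ofReal_iff zero_lt_one]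
    exact Real.rpow_lt_one_of_one_lt_of_neg (by norm_num) (by linarith)
  refine ⟨A ^ (q - 1) * ENNReal.ofReal (-(p + 1)⁻¹), mul_ne_top hA ofReal_ne_top, fun c => ?_⟩
  have hweight (j : ℤ) : ((4 : ℝ) ^ j)⁻¹ = 2 ^ (-2 * j) := by
    rw [neg_mul, zpow_neg, zpow_mul]; norm_num
  calc _ = ∫⁻ t in Ioi 0, (∑' j : ℤ,
          (Ici 1).indicator (fun s => ENNReal.ofReal (s ^ σ)) ((4 : ℝ) ^ j * t) * c j) ^ q := by
        refine setLIntegral_congr_fun measurableSet_Ioi fun t ht => ?_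
        simp only [← mul_sub, ← ite_zero_mul, indicator_Ici_one_rpow_four_zpow_mul ht, σ]
    _ ≤ ∫⁻ t in Ioi 0, A ^ (q - 1) * ∑' j : ℤ,
          (Ici 1).indicator (fun s => ENNReal.ofReal (s ^ p)) ((4 : ℝ) ^ j * t) * c j ^ q :=
        setLIntegral_mono' measurableSet_Ioi fun t ht =>
          rpow_tsum_indicator_Ici_one_rpow_mul_le (by norm_num) hq.le (half_pos hb) ht c
    _ = _ := by
        rw [lintegral_const_mul' _ _ hA,
          lintegral_Ioi_tsum_indicator_Ici_one_rpow_mul (by norm_num) hp, mul_assoc]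
        simp only [hweight]
end

section
/- For 0 ≤ σ₁, σ₂ ≤ 1 with σ₁ + σ₂ ≤ 1, and for f ∈ S(ℝ^{n+1}) (Schwartz), the function m(ξ,τ) = iτ |ξ|^{σ₂} m_{1-σ₁}(τ) / ( |ξ|^{σ₁+σ₂} + iτ m_{1-σ₁-σ₂}(τ) ), where m_σ(τ) = (a_σ - i b_σ sign τ)|τ|^{-σ}, is bounded: there is C > 0 with |m(ξ,τ)| ≤ C for all ξ ∈ ℝ^n, ξ ≠ 0, τ ∈ ℝ, τ ≠ 0. -/
/-!
Put `σ = σ₁ + σ₂`. The identity `iτ (α - iβ sign τ) |τ|^(-ρ) = (β + iα sign τ) |τ|^(1-ρ)` turns the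
numerator into `(b + i a sign τ) |ξ|^σ₂ |τ|^σ₁`, of modulus at most `(|a| + |b|) max(|ξ|^σ, |τ|^σ)`,
and the denominator into `|ξ|^σ + b_{1-σ} |τ|^σ ± i a_{1-σ} |τ|^σ`. As soon as `b_{1-σ} ≥ 0` and
`a_{1-σ}, b_{1-σ}` do not both vanish, the real and imaginary parts bound the modulus of the
denominator below by a multiple of the same `max(|ξ|^σ, |τ|^σ)`, and the ratio is bounded.

At the endpoints `σ = 0` and `σ = 1` the coefficients are `b_1 = π/2` and `(a_0, b_0) = (1, 0)`.
For `0 < ρ < 1`, `b_ρ = ∫_0^∞ sin t t^(-ρ) dt > 0`: the integral over each period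
`[2πk, 2π(k+1)]`, `k ≥ 1`, is nonnegative because `t^(-ρ)` decreases, while comparing `t^ρ`
with `(π/2)^ρ` and `π^ρ` gives `∫_ε^{2π} sin t t^(-ρ) dt ≥ π^(-ρ) (2^ρ cos ε - 1) → π^(-ρ) (2^ρ - 1) > 0`.
-/

open MeasureTheory Real Set Filter intervalIntegral

lemma intervalIntegrable_sin_div_rpow {s a b : ℝ} (ha : 0 < a) (hb : 0 < b) :
    IntervalIntegrable (fun t => sin t / t ^ s) volume a b := by
  refine ContinuousOn.intervalIntegrable fun t ht => ?_
  have ht : 0 < t := (lt_min ha hb).trans_le ht.1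
  exact (continuous_sin.continuousAt.div (continuousAt_id.rpow_const (Or.inl ht.ne'))
    (rpow_pos_of_pos ht s).ne').continuousWithinAt

lemma integral_sin_div_rpow_period_nonneg {s : ℝ} (hs : 0 ≤ s) {k : ℕ} (hk : k ≠ 0) :
    0 ≤ ∫ t in k * (2 * π)..(k + 1) * (2 * π), sin t / t ^ s := by
  set A : ℝ := k * (2 * π)
  have hA : 0 < A := by positivity
  have hAπ : 0 < A + π := by positivity
  have hsin : ∀ u ∈ Icc A (A + π), 0 ≤ sin u := fun u hu => by
    rw [← sin_sub_nat_mul_two_pi u k]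
    exact sin_nonneg_of_nonneg_of_le_pi (by linarith [hu.1]) (by linarith [hu.2])
  have hshift : ∫ t in A + π..A + π + π, sin t / t ^ s
      = ∫ u in A..A + π, sin (u + π) / (u + π) ^ s :=
    (integral_comp_add_right (fun t => sin t / t ^ s) π).symm
  have hshift_int := (intervalIntegrable_sin_div_rpow (s := s) hAπ
    (by positivity : 0 < A + π + π)).comp_add_right π
  rw [show ((k : ℝ) + 1) * (2 * π) = A + π + π by ring,
    ← integral_add_adjacent_intervals (intervalIntegrable_sin_div_rpow hA hAπ)
      (intervalIntegrable_sin_div_rpow hAπ (by positivity)), hshift,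
    ← integral_add (intervalIntegrable_sin_div_rpow hA hAπ) (by simpa using hshift_int)]
  refine intervalIntegral.integral_nonneg (by linarith [pi_pos]) fun u hu => ?_
  have hu0 : 0 < u := hA.trans_le hu.1
  rw [sin_add_pi, neg_div, ← sub_eq_add_neg, sub_nonneg]
  exact div_le_div_of_nonneg_left (hsin u hu) (rpow_pos_of_pos hu0 s)
    (rpow_le_rpow hu0.le (by linarith [pi_pos]) hs)

lemma integral_sin_div_rpow_le_integral_periods {s ε : ℝ} (hs : 0 ≤ s) (hε : 0 < ε) (k : ℕ) :
    ∫ t in ε..2 * π, sin t / t ^ s ≤ ∫ t in ε..(k + 1) * (2 * π), sin t / t ^ s := by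
  induction k with
  | zero => simp
  | succ k ih =>
    have hsplit := integral_add_adjacent_intervals (b := (k + 1) * (2 * π))
      (c := (k + 1 + 1) * (2 * π)) (intervalIntegrable_sin_div_rpow (s := s) hε (by positivity))
      (intervalIntegrable_sin_div_rpow (by positivity) (by positivity))
    have hperiod := integral_sin_div_rpow_period_nonneg hs k.succ_ne_zero
    push_cast at hperiod ⊢
    linarith

lemma sin_div_rpow_le_sin_div_rpow {s c t : ℝ} (hs : 0 ≤ s) (hc : 0 < c) (ht : 0 < t)
    (h : t ≤ c ∧ 0 ≤ sin t ∨ c ≤ t ∧ sin t ≤ 0) : sin t / c ^ s ≤ sin t / t ^ s := by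
  rcases h with ⟨htc, hsin⟩ | ⟨hct, hsin⟩
  · exact div_le_div_of_nonneg_left hsin (rpow_pos_of_pos ht s) (rpow_le_rpow ht.le htc hs)
  · simpa only [neg_div, neg_le_neg_iff] using div_le_div_of_nonneg_left (neg_nonneg.2 hsin)
      (rpow_pos_of_pos hc s) (rpow_le_rpow hc.le hct hs)

lemma le_integral_sin_div_rpow {s ε : ℝ} (hs : 0 ≤ s) (hε : 0 < ε) (hεπ : ε ≤ π / 2) :
    π ^ (-s) * (2 ^ s * cos ε - 1) ≤ ∫ t in ε..2 * π, sin t / t ^ s := by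
  have hπ := pi_pos
  have hhead : cos ε / (π / 2) ^ s ≤ ∫ t in ε..π / 2, sin t / t ^ s := by
    calc cos ε / (π / 2) ^ s = ∫ t in ε..π / 2, sin t / (π / 2) ^ s := by
          rw [intervalIntegral.integral_div, integral_sin, cos_pi_div_two, sub_zero]
      _ ≤ _ := integral_mono_on hεπ ((continuous_sin.div_const _).intervalIntegrable _ _)
          (intervalIntegrable_sin_div_rpow hε (by positivity))
          fun t ht => sin_div_rpow_le_sin_div_rpow hs (by positivity) (hε.trans_le ht.1) <| .inl
            ⟨ht.2, sin_nonneg_of_nonneg_of_le_pi (hε.le.trans ht.1) (by linarith [ht.2])⟩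
  have htail : -1 / π ^ s ≤ ∫ t in π / 2..2 * π, sin t / t ^ s := by
    calc -1 / π ^ s = ∫ t in π / 2..2 * π, sin t / π ^ s := by
          rw [intervalIntegral.integral_div, integral_sin, cos_pi_div_two, cos_two_pi]; ring
      _ ≤ _ := integral_mono_on (by linarith) ((continuous_sin.div_const _).intervalIntegrable _ _)
          (intervalIntegrable_sin_div_rpow (by positivity) (by positivity)) fun t ht => by
            refine sin_div_rpow_le_sin_div_rpow hs hπ (by linarith [ht.1]) ?_
            rcases le_total t π with htπ | hπt
            · exact .inl ⟨htπ, sin_nonneg_of_nonneg_of_le_pi (by linarith [ht.1]) htπ⟩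
            · exact .inr ⟨hπt, by
                rw [← sin_sub_two_pi]
                exact sin_nonpos_of_nonpos_of_neg_pi_le (by linarith [ht.2]) (by linarith)⟩
  rw [← integral_add_adjacent_intervals (b := π / 2)
    (intervalIntegrable_sin_div_rpow hε (by positivity))
    (intervalIntegrable_sin_div_rpow (by positivity) (by positivity))]
  calc π ^ (-s) * (2 ^ s * cos ε - 1) = cos ε / (π / 2) ^ s + -1 / π ^ s := by
        rw [rpow_neg hπ.le, div_rpow hπ.le zero_le_two]
        field_simp
        ring
    _ ≤ _ := add_le_add hhead htail

open Topology in
theorem pos_of_tendsto_integral_sin_div_rpow {s L : ℝ} (hs : 0 < s)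
    (h : Tendsto (fun q : ℝ × ℝ => ∫ t in q.1..q.2, sin t / t ^ s) (𝓝[>] 0 ×ˢ atTop) (𝓝 L)) :
    0 < L := by
  set e : ℕ → ℝ := fun n => 1 / (n + 1)
  have he_pos : ∀ n, 0 < e n := fun n => by positivity
  have he_le : ∀ n, e n ≤ π / 2 := fun n =>
    ((div_le_one (by positivity)).2 (by linarith [n.cast_nonneg (α := ℝ)])).trans
      (by linarith [pi_gt_three])
  have he : Tendsto e atTop (𝓝 0) := tendsto_one_div_add_atTop_nhds_zero_nat
  have he' : Tendsto e atTop (𝓝[>] 0) :=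
    tendsto_nhdsWithin_of_tendsto_nhds_of_eventually_within _ he (.of_forall he_pos)
  have hR : Tendsto (fun n : ℕ => ((n : ℝ) + 1) * (2 * π)) atTop atTop :=
    (tendsto_atTop_add_const_right _ 1 tendsto_natCast_atTop_atTop).atTop_mul_const
      (by positivity)
  set F : ℝ → ℝ := fun x => π ^ (-s) * (2 ^ s * cos x - 1)
  have hF : Tendsto (F ∘ e) atTop (𝓝 (F 0)) := ((by fun_prop : Continuous F).tendsto 0).comp he
  have hF0 : 0 < F 0 := by
    simp only [F, cos_zero, mul_one]
    exact mul_pos (rpow_pos_of_pos pi_pos _) (sub_pos.2 (one_lt_rpow one_lt_two hs))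
  refine hF0.trans_le (le_of_tendsto_of_tendsto' hF (h.comp (he'.prodMk hR)) fun n => ?_)
  exact (le_integral_sin_div_rpow hs.le (he_pos n) (he_le n)).trans
    (integral_sin_div_rpow_le_integral_periods hs.le (he_pos n) n)

open Complex (I)

lemma I_mul_mul_sub_mul_sign_mul_rpow (α β ρ : ℝ) {τ : ℝ} (hτ : τ ≠ 0) :
    I * τ * ((α : ℂ) - I * β * (Real.sign τ : ℝ)) * ((|τ| ^ (-ρ) : ℝ) : ℂ)
      = ((β : ℂ) + (α * Real.sign τ : ℝ) * I) * ((|τ| ^ (1 - ρ) : ℝ) : ℂ) := by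
  have ht : 0 < |τ| := abs_pos.2 hτ
  have hτ' : τ = Real.sign τ * |τ| := by
    rcases hτ.lt_or_gt with h | h
    · rw [sign_of_neg h, abs_of_neg h]; ring
    · rw [sign_of_pos h, abs_of_pos h]; ring
  have hsq : Real.sign τ * Real.sign τ = 1 := by
    rcases sign_apply_eq_of_ne_zero τ hτ with h | h <;> rw [h] <;> norm_num
  have hpow : |τ| * |τ| ^ (-ρ) = |τ| ^ (1 - ρ) := by
    rw [sub_eq_add_neg, rpow_add ht, rpow_one]
  rw [← hpow]
  set g := Real.sign τ
  set t := |τ|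
  set T := t ^ (-ρ)
  conv_lhs => rw [hτ']
  push_cast
  linear_combination (β * t * T : ℂ) * (by exact_mod_cast hsq : (g : ℂ) * g = 1)
    - (β * t * T * g * g : ℂ) * Complex.I_sq

lemma norm_add_mul_I_le {α β ε : ℝ} (hε : |ε| = 1) :
    ‖(β : ℂ) + (α * ε : ℝ) * I‖ ≤ |α| + |β| := by
  refine (Complex.norm_le_abs_re_add_abs_im _).trans_eq ?_
  simp [abs_mul, hε, add_comm]

lemma min_mul_max_le_norm_add {x y α β ε : ℝ} (hx : 0 ≤ x) (hy : 0 ≤ y) (hβ : 0 ≤ β)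
    (hε : |ε| = 1) :
    min 1 (max β |α|) * max x y ≤ ‖(x : ℂ) + ((β : ℂ) + (α * ε : ℝ) * I) * y‖ := by
  set z : ℂ := x + ((β : ℂ) + (α * ε : ℝ) * I) * y
  have hre : z.re = x + β * y := by simp [z]
  have him : |z.im| = |α| * y := by simp [z, abs_mul, hε, abs_of_nonneg hy]
  have hre_le := hre ▸ Complex.re_le_norm z
  have him_le := him ▸ Complex.abs_im_le_norm z
  rw [mul_max_of_nonneg _ _ (le_min zero_le_one (le_max_of_le_right (abs_nonneg α)))]
  refine max_le ?_ ?_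
  · nlinarith [min_le_left 1 (max β |α|)]
  · refine (mul_le_mul_of_nonneg_right (min_le_right _ _) hy).trans ?_
    rw [max_mul_of_nonneg _ _ hy]
    exact max_le (by nlinarith) him_le

lemma rpow_mul_rpow_le_max_rpow_add {x y p q : ℝ} (hx : 0 ≤ x) (hy : 0 ≤ y) (hp : 0 ≤ p)
    (hq : 0 ≤ q) : x ^ p * y ^ q ≤ max (x ^ (p + q)) (y ^ (p + q)) := by
  rcases le_total x y with hxy | hyx
  · rw [rpow_add_of_nonneg hy hp hq]
    exact le_max_of_le_right <|
      mul_le_mul_of_nonneg_right (rpow_le_rpow hx hxy hp) (rpow_nonneg hy q)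
  · rw [rpow_add_of_nonneg hx hp hq]
    exact le_max_of_le_left <|
      mul_le_mul_of_nonneg_left (rpow_le_rpow hy hyx hq) (rpow_nonneg hx p)

theorem norm_anisotropic_symbol_le {σ₁ σ₂ α β α' β' r τ : ℝ} (hσ₁ : 0 ≤ σ₁) (hσ₂ : 0 ≤ σ₂)
    (hβ' : 0 ≤ β') (hαβ' : 0 < max β' |α'|) (hr : 0 ≤ r) (hτ : τ ≠ 0) :
    ‖I * τ * ((r ^ σ₂ : ℝ) : ℂ) * ((α : ℂ) - I * β * (Real.sign τ : ℝ))
          * ((|τ| ^ (-(1 - σ₁)) : ℝ) : ℂ)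
        / (((r ^ (σ₁ + σ₂) : ℝ) : ℂ)
          + I * τ * ((α' : ℂ) - I * β' * (Real.sign τ : ℝ)) * ((|τ| ^ (-(1 - σ₁ - σ₂)) : ℝ) : ℂ))‖
      ≤ (|α| + |β|) / min 1 (max β' |α'|) := by
  have hsign : |Real.sign τ| = 1 := by
    rcases sign_apply_eq_of_ne_zero τ hτ with h | h <;> simp [h]
  have ht : 0 < |τ| := abs_pos.2 hτ
  rw [mul_right_comm _ (((r ^ σ₂ : ℝ) : ℂ)), mul_right_comm _ (((r ^ σ₂ : ℝ) : ℂ)),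
    I_mul_mul_sub_mul_sign_mul_rpow _ _ _ hτ, I_mul_mul_sub_mul_sign_mul_rpow _ _ _ hτ,
    sub_sub_cancel, show 1 - (1 - σ₁ - σ₂) = σ₁ + σ₂ by ring, norm_div]
  set m := max (r ^ (σ₁ + σ₂)) (|τ| ^ (σ₁ + σ₂))
  have hm : 0 < m := lt_max_of_lt_right (rpow_pos_of_pos ht _)
  have hprod : r ^ σ₂ * |τ| ^ σ₁ ≤ m := by
    simpa only [add_comm σ₂] using rpow_mul_rpow_le_max_rpow_add hr ht.le hσ₂ hσ₁
  have hnum : ‖((β : ℂ) + (α * Real.sign τ : ℝ) * I) * ((|τ| ^ σ₁ : ℝ) : ℂ) * ((r ^ σ₂ : ℝ) : ℂ)‖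
      ≤ (|α| + |β|) * m := by
    rw [norm_mul, norm_mul, Complex.norm_real, Complex.norm_real, norm_of_nonneg (by positivity),
      norm_of_nonneg (by positivity), mul_assoc, mul_comm (_ ^ σ₁)]
    exact mul_le_mul (norm_add_mul_I_le hsign) hprod (by positivity) (by positivity)
  have hden := min_mul_max_le_norm_add (α := α') (rpow_nonneg hr (σ₁ + σ₂))
    (rpow_nonneg ht.le (σ₁ + σ₂)) hβ' hsign
  calc _ ≤ (|α| + |β|) * m / (min 1 (max β' |α'|) * m) :=
        div_le_div₀ (by positivity) hnum (by positivity) hden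
    _ = _ := mul_div_mul_right _ _ hm.ne'

theorem anisotropic_symbol_bounded_general (n : ℕ) (σ₁ σ₂ : ℝ)
    (h1 : 0 ≤ σ₁) (h2 : 0 ≤ σ₂) (hsum : σ₁ + σ₂ ≤ 1)
    (a b : ℝ → ℝ)
    (hb : ∀ σ : ℝ, 0 < σ → σ < 1 →
      Tendsto (fun q : ℝ × ℝ => ∫ t in q.1..q.2, Real.sin t / t ^ σ)
        ((nhdsWithin 0 (Set.Ioi 0)) ×ˢ Filter.atTop) (nhds (b σ)))
    (ha0 : a 0 = 1) (hb0 : b 0 = 0) (hb1 : b 1 = Real.pi / 2) :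
    ∃ C > 0, ∀ ξ : EuclideanSpace ℝ (Fin n), ξ ≠ 0 → ∀ τ : ℝ, τ ≠ 0 →
      norm
        ((Complex.I * (τ : ℂ) * ((‖ξ‖ ^ σ₂ : ℝ) : ℂ)
            * (((a (1 - σ₁) : ℝ) : ℂ) - Complex.I * ((b (1 - σ₁) : ℝ) : ℂ)
                  * ((Real.sign τ : ℝ) : ℂ))
            * (((|τ| ^ (-(1 - σ₁)) : ℝ) : ℝ) : ℂ))
          / (((‖ξ‖ ^ (σ₁ + σ₂) : ℝ) : ℂ)
              + Complex.I * (τ : ℂ)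
                * (((a (1 - σ₁ - σ₂) : ℝ) : ℂ) - Complex.I * ((b (1 - σ₁ - σ₂) : ℝ) : ℂ)
                      * ((Real.sign τ : ℝ) : ℂ))
                * (((|τ| ^ (-(1 - σ₁ - σ₂)) : ℝ) : ℝ) : ℂ)))
        ≤ C := by
  obtain ⟨hb_nonneg, hab_pos⟩ :
      0 ≤ b (1 - σ₁ - σ₂) ∧ 0 < max (b (1 - σ₁ - σ₂)) |a (1 - σ₁ - σ₂)| := by
    rcases (add_nonneg h1 h2).eq_or_lt with hσ | hσ
    · rw [show 1 - σ₁ - σ₂ = 1 by linarith, hb1]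
      exact ⟨by positivity, lt_max_of_lt_left (by positivity)⟩
    rcases hsum.eq_or_lt with hσ' | hσ'
    · rw [show 1 - σ₁ - σ₂ = 0 by linarith, ha0, hb0]
      norm_num
    have hpos := pos_of_tendsto_integral_sin_div_rpow (by linarith)
      (hb (1 - σ₁ - σ₂) (by linarith) (by linarith))
    exact ⟨hpos.le, lt_max_of_lt_left hpos⟩
  refine ⟨(|a (1 - σ₁)| + |b (1 - σ₁)|) / min 1 (max (b (1 - σ₁ - σ₂)) |a (1 - σ₁ - σ₂)|) + 1,
    by positivity, fun ξ _ τ hτ => ?_⟩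
  exact (norm_anisotropic_symbol_le h1 h2 hb_nonneg hab_pos (norm_nonneg ξ) hτ).trans
    (le_add_of_nonneg_right zero_le_one)

/-- Boundedness of the anisotropic symbol
`iτ |ξ|^{σ₂} m_{1-σ₁}(τ) / (|ξ|^{σ₁+σ₂} + iτ m_{1-σ₁-σ₂}(τ))`,
where `m_σ(τ) = (a_σ - i b_σ sign τ)|τ|^{-σ}` and `m_0 = 1`. -/
theorem anisotropic_symbol_bounded (n : ℕ) (σ₁ σ₂ : ℝ)
    (h1 : 0 ≤ σ₁) (h1' : σ₁ ≤ 1) (h2 : 0 ≤ σ₂) (h2' : σ₂ ≤ 1) (hsum : σ₁ + σ₂ ≤ 1)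
    (a b : ℝ → ℝ)
    (ha : ∀ σ : ℝ, 0 < σ → σ < 1 →
      Tendsto (fun q : ℝ × ℝ => ∫ t in q.1..q.2, Real.cos t / t ^ σ)
        ((nhdsWithin 0 (Set.Ioi 0)) ×ˢ Filter.atTop) (nhds (a σ)))
    (hb : ∀ σ : ℝ, 0 < σ → σ < 1 →
      Tendsto (fun q : ℝ × ℝ => ∫ t in q.1..q.2, Real.sin t / t ^ σ)
        ((nhdsWithin 0 (Set.Ioi 0)) ×ˢ Filter.atTop) (nhds (b σ)))
    (ha0 : a 0 = 1) (hb0 : b 0 = 0) (ha1 : a 1 = 0) (hb1 : b 1 = Real.pi / 2) :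
    ∃ C > 0, ∀ ξ : EuclideanSpace ℝ (Fin n), ξ ≠ 0 → ∀ τ : ℝ, τ ≠ 0 →
      norm
        ((Complex.I * (τ : ℂ) * ((‖ξ‖ ^ σ₂ : ℝ) : ℂ)
            * (((a (1 - σ₁) : ℝ) : ℂ) - Complex.I * ((b (1 - σ₁) : ℝ) : ℂ)
                  * ((Real.sign τ : ℝ) : ℂ))
            * (((|τ| ^ (-(1 - σ₁)) : ℝ) : ℝ) : ℂ))
          / (((‖ξ‖ ^ (σ₁ + σ₂) : ℝ) : ℂ)
              + Complex.I * (τ : ℂ)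
                * (((a (1 - σ₁ - σ₂) : ℝ) : ℂ) - Complex.I * ((b (1 - σ₁ - σ₂) : ℝ) : ℂ)
                      * ((Real.sign τ : ℝ) : ℂ))
                * (((|τ| ^ (-(1 - σ₁ - σ₂)) : ℝ) : ℝ) : ℂ)))
        ≤ C :=
  anisotropic_symbol_bounded_general n σ₁ σ₂ h1 h2 hsum a b hb ha0 hb0 hb1
end
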